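/- Each positive rational immediately precedes exactly two positive rationals. Explicitly: 1 immediately precedes exactly 2 and 1/2; and if α = [a_1, …, a_k] with a_k ≥ 2, then the positive rationals immediately preceded by α are exactly [a_1, …, a_{k−1}, a_k + 1] and [a_1, …, a_{k−1}, a_k − 1, 2]. -/

import Mathlib

namespace ResolutionGraph

/-- The value of the continued fraction `[a₁, …, aₙ] = a₁ + 1/[a₂, …, aₙ]`. -/
def cfVal : List ℕ → ℚ
  | [] => 0
  | [a] => (a : ℚ)
  | a :: b :: rest => (a : ℚ) + 1 / cfVal (b :: rest)

/-- `L = (a₁, …, aₙ)` is a continued fraction expansion of `q`: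
`n ≥ 1`, `a₁ ≥ 0`, `a₂, …, aₙ ≥ 1` and `[a₁, …, aₙ] = q`. -/
def IsExpansion (L : List ℕ) (q : ℚ) : Prop :=
  L ≠ [] ∧ (∀ x ∈ L.tail, 1 ≤ x) ∧ cfVal L = q

/-- `q` has length `m`, i.e. some expansion `(a₁, …, aₙ)` of `q` satisfies `a₁ + ⋯ + aₙ = m`. -/
def HasLen (q : ℚ) (m : ℕ) : Prop :=
  ∃ L : List ℕ, IsExpansion L q ∧ L.sum = m

/-- `α ∼ β` : one of them has an expansion `[a₁, …, a_k]` and the other equals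
`[a₁, …, a_k, n]` for some integer `n ≥ 1`. -/
def Related (α β : ℚ) : Prop :=
  (∃ (L : List ℕ) (n : ℕ), 1 ≤ n ∧ IsExpansion L α ∧ cfVal (L ++ [n]) = β) ∨
  (∃ (L : List ℕ) (n : ℕ), 1 ≤ n ∧ IsExpansion L β ∧ cfVal (L ++ [n]) = α)

/-- `γ` is the value of the convolution `α ∗ β`, computed from a witness of `α ∼ β`:
for an expansion `[a₁, …, a_k]` of one of them with the other equal to `[a₁, …, a_k, n]`
(`n ≥ 1` an integer), `γ = [a₁, …, a_k, n + 1]`. -/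
def ConvWitness (α β γ : ℚ) : Prop :=
  ∃ (L : List ℕ) (n : ℕ), 1 ≤ n ∧
    ((IsExpansion L α ∧ cfVal (L ++ [n]) = β) ∨ (IsExpansion L β ∧ cfVal (L ++ [n]) = α)) ∧
    cfVal (L ++ [n + 1]) = γ

/-- `α ≺ β` : `β` has an expansion `[a₁, …, a_k]` and `α = [a₁, …, a_ℓ, b]` for some
`0 ≤ ℓ ≤ k − 1` and `1 ≤ b ≤ a_{ℓ+1}`. -/
def Precedes (α β : ℚ) : Prop :=
  ∃ L : List ℕ, IsExpansion L β ∧ ∃ ℓ : ℕ, ∃ h : ℓ < L.length, ∃ b : ℕ,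
    1 ≤ b ∧ b ≤ L.get ⟨ℓ, h⟩ ∧ cfVal (L.take ℓ ++ [b]) = α

/-- `α` immediately precedes `β` : `α ≺ β` and `|β| = |α| + 1`. -/
def ImmediatelyPrecedes (α β : ℚ) : Prop :=
  Precedes α β ∧ ∃ a : ℕ, HasLen α a ∧ HasLen β (a + 1)

lemma cfVal_cons (a : ℕ) (M : List ℕ) (h : M ≠ []) :
    cfVal (a :: M) = a + 1 / cfVal M := by
  match M with
  | [] => exact absurd rfl h
  | b :: rest => rfl

lemma one_le_cfVal (L : List ℕ) (h1 : ∀ x ∈ L, 1 ≤ x) (h2 : L ≠ []) : 1 ≤ cfVal L := by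
  induction L with
  | nil => exact absurd rfl h2
  | cons a t ih =>
    rcases eq_or_ne t [] with rfl | ht
    · have := h1 a (by simp)
      simp only [cfVal]
      exact_mod_cast this
    · have hta : 1 ≤ cfVal t := ih (fun x hx => h1 x (by simp [hx])) ht
      have ha : 1 ≤ a := h1 a (by simp)
      rw [cfVal_cons a t ht]
      have : (0:ℚ) < 1 / cfVal t := by positivity
      have : (1:ℚ) ≤ (a:ℚ) := by exact_mod_cast ha
      linarith

lemma cfVal_pos (L : List ℕ) (h1 : ∀ x ∈ L.tail, 1 ≤ x) (h2 : L ≠ [])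
    (h3 : 1 ≤ L.getLastD 0) : 0 < cfVal L := by
  match L with
  | [a] => simp [cfVal] at h3 ⊢; omega
  | a :: b :: rest =>
    have ht : 1 ≤ cfVal (b :: rest) := one_le_cfVal _ (by simpa using h1) (by simp)
    rw [cfVal_cons a _ (by simp)]
    have : (0:ℚ) ≤ a := by positivity
    have : (0:ℚ) < 1 / cfVal (b :: rest) := by positivity
    linarith

lemma cfVal_eq_one (L : List ℕ) (h1 : ∀ x ∈ L, 1 ≤ x) (h2 : L ≠ [])
    (h3 : cfVal L = 1) : L = [1] := by
  match L with
  | [a] =>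
    simp only [cfVal] at h3
    have : a = 1 := by exact_mod_cast h3
    simp [this]
  | a :: b :: rest =>
    exfalso
    have ht : 1 ≤ cfVal (b :: rest) := one_le_cfVal _ (fun x hx => h1 x (by simp [hx])) (by simp)
    rw [cfVal_cons a _ (by simp)] at h3
    have ha : 1 ≤ a := h1 a (by simp)
    have ha' : (1:ℚ) ≤ (a:ℚ) := by exact_mod_cast ha
    have hpos : (0:ℚ) < 1 / cfVal (b :: rest) := by positivity
    linarith

lemma cfVal_append_congr (P T T' : List ℕ) (hT : T ≠ []) (hT' : T' ≠ [])
    (h : cfVal T = cfVal T') : cfVal (P ++ T) = cfVal (P ++ T') := by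
  induction P with
  | nil => simpa using h
  | cons a P ih =>
    have h1 : (P ++ T) ≠ [] := by simp [hT]
    have h2 : (P ++ T') ≠ [] := by simp [hT']
    rw [List.cons_append, List.cons_append, cfVal_cons a _ h1, cfVal_cons a _ h2, ih]

lemma cfVal_split (P : List ℕ) (c : ℕ) : cfVal (P ++ [c, 1]) = cfVal (P ++ [c + 1]) := by
  apply cfVal_append_congr _ _ _ (by simp) (by simp)
  simp [cfVal]

lemma mem_tail_take {x : ℕ} {l : List ℕ} {n : ℕ} (h : x ∈ (l.take n).tail) : x ∈ l.tail := by
  cases l with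
  | nil => simp at h
  | cons a t =>
    cases n with
    | zero => simp at h
    | succ m =>
      simp only [List.take_succ_cons, List.tail_cons] at h ⊢
      exact List.take_subset m t h

lemma mem_tail_drop {x : ℕ} {l : List ℕ} {n : ℕ} (h : x ∈ l.drop (n+1)) : x ∈ l.tail := by
  have e : l.drop (n+1) = l.tail.drop n := by
    rw [← List.drop_one, List.drop_drop, Nat.add_comm]
  rw [e] at h
  exact List.drop_subset n l.tail h

lemma mem_tail_concat {x a : ℕ} {l : List ℕ} (h : x ∈ (l ++ [a]).tail) : x ∈ l.tail ∨ x = a := by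
  cases l with
  | nil => right; simpa using h
  | cons p ps =>
    simp only [List.cons_append, List.tail_cons, List.mem_append, List.mem_singleton] at h
    exact h

lemma mem_tail_concat_of {x a : ℕ} {l : List ℕ} (h : x ∈ l.tail) : x ∈ (l ++ [a]).tail := by
  cases l with
  | nil => simp at h
  | cons p ps => simp only [List.cons_append, List.tail_cons, List.mem_append]; left; exact h

lemma eq_dropLast_concat {L : List ℕ} (h : L ≠ []) : L = L.dropLast ++ [L.getLastD 0] := by
  cases L with
  | nil => exact absurd rfl h
  | cons a t =>
    conv_lhs => rw [← List.dropLast_append_getLast (l := a :: t) (by simp)]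
    rw [List.getLast_eq_getLastD, List.getLastD_cons]

lemma one_le_getLastD_of {M : List ℕ} (ht : ∀ x ∈ M.tail, 1 ≤ x) (i : ℕ) (h : i < M.length)
    (hi : 1 ≤ M[i]) : 1 ≤ M.getLastD 0 := by
  match M with
  | [a] =>
    have : i = 0 := by simpa using h
    subst this
    simpa using hi
  | a :: b :: t =>
    have e : (a :: b :: t).getLastD 0 = (b :: t).getLast (by simp) := by
      rw [List.getLastD_cons, List.getLast_eq_getLastD, List.getLastD_cons]
    rw [e]
    exact ht _ (List.getLast_mem _)

lemma main_ind : ∀ (n : ℕ) (L L' : List ℕ) (q : ℚ), L.length ≤ n → 0 < q →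
    IsExpansion L q → IsExpansion L' q →
    L.sum = L'.sum ∧ (2 ≤ L.getLastD 0 → 2 ≤ L'.getLastD 0 → L = L') := by
  intro n
  induction n with
  | zero => intro L L' q hn _ hL _; obtain ⟨hne, -, -⟩ := hL; simp at hn; exact absurd hn hne
  | succ n ih =>
    rintro L L' q hn hq ⟨hLne, hLt, hLv⟩ ⟨hL'ne, hL't, hL'v⟩
    match L, L' with
    | a :: t, a' :: t' =>
      rcases eq_or_ne t [] with rfl | ht <;> rcases eq_or_ne t' [] with rfl | ht'
      · have : (a:ℚ) = (a':ℚ) := by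
          simp only [cfVal] at hLv hL'v; rw [hLv, hL'v]
        have : a = a' := by exact_mod_cast this
        simp [this]
      · have hy : 1 ≤ cfVal t' := one_le_cfVal t' (by simpa using hL't) ht'
        rw [cfVal_cons a' t' ht'] at hL'v
        simp only [cfVal] at hLv
        have hy0 : (0:ℚ) < cfVal t' := by linarith
        have h1 : (0:ℚ) < 1 / cfVal t' := by positivity
        have h2 : 1 / cfVal t' ≤ 1 := by
          rw [div_le_one hy0]; linarith
        have key : (a':ℚ) + 1 / cfVal t' = a := by rw [hL'v, hLv]
        have hlt : (a':ℚ) < a := by linarith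
        have hle : (a:ℚ) ≤ a' + 1 := by linarith
        have hlt' : a' < a := by exact_mod_cast hlt
        have hle' : a ≤ a' + 1 := by exact_mod_cast hle
        have haa : a = a' + 1 := by omega
        have hy1 : 1 / cfVal t' = 1 := by
          rw [← hL'v, haa] at hLv; push_cast at hLv; linarith
        have hyv : cfVal t' = 1 := by
          field_simp at hy1; linarith
        have ht'1 : t' = [1] := cfVal_eq_one t' (by simpa using hL't) ht' hyv
        subst ht'1
        refine ⟨by simp [haa], ?_⟩
        intro _ hc
        simp at hc
      · have hy : 1 ≤ cfVal t := one_le_cfVal t (by simpa using hLt) ht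
        rw [cfVal_cons a t ht] at hLv
        simp only [cfVal] at hL'v
        have hy0 : (0:ℚ) < cfVal t := by linarith
        have h1 : (0:ℚ) < 1 / cfVal t := by positivity
        have h2 : 1 / cfVal t ≤ 1 := by rw [div_le_one hy0]; linarith
        have key : (a:ℚ) + 1 / cfVal t = a' := by rw [hLv, hL'v]
        have hlt : (a:ℚ) < a' := by linarith
        have hle : (a':ℚ) ≤ a + 1 := by linarith
        have hlt' : a < a' := by exact_mod_cast hlt
        have hle' : a' ≤ a + 1 := by exact_mod_cast hle
        have haa : a' = a + 1 := by omega
        have hy1 : 1 / cfVal t = 1 := by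
          rw [haa] at hL'v; rw [← hLv] at hL'v; push_cast at hL'v; linarith
        have hyv : cfVal t = 1 := by field_simp at hy1; linarith
        have ht1 : t = [1] := cfVal_eq_one t (by simpa using hLt) ht hyv
        subst ht1
        refine ⟨by simp [haa], ?_⟩
        intro hc
        simp at hc
      · have hx : 1 ≤ cfVal t := one_le_cfVal t (by simpa using hLt) ht
        have hy : 1 ≤ cfVal t' := one_le_cfVal t' (by simpa using hL't) ht'
        rw [cfVal_cons a t ht] at hLv
        rw [cfVal_cons a' t' ht'] at hL'v
        have hx0 : (0:ℚ) < cfVal t := by linarith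
        have hy0 : (0:ℚ) < cfVal t' := by linarith
        rcases eq_or_lt_of_le hx with hx1 | hx1 <;> rcases eq_or_lt_of_le hy with hy1 | hy1
        · have ht1 : t = [1] := cfVal_eq_one t (by simpa using hLt) ht hx1.symm
          have ht'1 : t' = [1] := cfVal_eq_one t' (by simpa using hL't) ht' hy1.symm
          subst ht1; subst ht'1
          have : (a:ℚ) = a' := by
            rw [← hx1] at hLv; rw [← hy1] at hL'v
            rw [← hL'v] at hLv; linarith
          have haa : a = a' := by exact_mod_cast this
          simp [haa]
        · exfalso
          have h2 : 1 / cfVal t' < 1 := by rw [div_lt_one hy0]; linarith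
          have h1 : (0:ℚ) < 1 / cfVal t' := by positivity
          rw [← hx1] at hLv
          norm_num at hLv
          have : (a:ℚ) + 1 = (a':ℚ) + 1 / cfVal t' := by rw [hLv]; exact hL'v.symm
          have hlt : (a':ℚ) < a + 1 := by linarith
          have hgt : (a:ℚ) + 1 < a' + 1 := by linarith
          have : a' < a + 1 := by exact_mod_cast hlt
          have : a + 1 < a' + 1 := by exact_mod_cast hgt
          omega
        · exfalso
          have h2 : 1 / cfVal t < 1 := by rw [div_lt_one hx0]; linarith
          have h1 : (0:ℚ) < 1 / cfVal t := by positivity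
          rw [← hy1] at hL'v
          norm_num at hL'v
          have : (a':ℚ) + 1 = (a:ℚ) + 1 / cfVal t := by rw [hL'v]; exact hLv.symm
          have hlt : (a:ℚ) < a' + 1 := by linarith
          have hgt : (a':ℚ) + 1 < a + 1 := by linarith
          have : a < a' + 1 := by exact_mod_cast hlt
          have : a' + 1 < a + 1 := by exact_mod_cast hgt
          omega
        · have h1 : (0:ℚ) < 1 / cfVal t := by positivity
          have h2 : 1 / cfVal t < 1 := by rw [div_lt_one hx0]; linarith
          have h1' : (0:ℚ) < 1 / cfVal t' := by positivity
          have h2' : 1 / cfVal t' < 1 := by rw [div_lt_one hy0]; linarith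
          have heq : (a:ℚ) + 1 / cfVal t = (a':ℚ) + 1 / cfVal t' := by rw [hLv, hL'v]
          have hlt : (a:ℚ) < a' + 1 := by linarith
          have hlt' : (a':ℚ) < a + 1 := by linarith
          have hlt2 : a < a' + 1 := by exact_mod_cast hlt
          have hlt2' : a' < a + 1 := by exact_mod_cast hlt'
          have haa : a = a' := by omega
          have hxy : cfVal t = cfVal t' := by
            rw [haa] at heq
            have : 1 / cfVal t = 1 / cfVal t' := by linarith
            field_simp at this; linarith
          have hexp : IsExpansion t (cfVal t) :=
            ⟨ht, fun x hx => hLt x (List.mem_of_mem_tail hx), rfl⟩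
          have hexp' : IsExpansion t' (cfVal t) :=
            ⟨ht', fun x hx => hL't x (List.mem_of_mem_tail hx), hxy.symm⟩
          have hlen : t.length ≤ n := by simp at hn; omega
          obtain ⟨hsum, huniq⟩ := ih t t' (cfVal t) hlen (by linarith) hexp hexp'
          constructor
          · simp [hsum, haa]
          · intro hgL hgL'
            have e1 : (a :: t).getLastD 0 = t.getLastD 0 := by
              cases t with | nil => exact absurd rfl ht | cons b s => simp
            have e2 : (a' :: t').getLastD 0 = t'.getLastD 0 := by
              cases t' with | nil => exact absurd rfl ht' | cons b s => simp
            rw [e1] at hgL; rw [e2] at hgL'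
            rw [haa, huniq hgL hgL']

lemma sum_inv {q : ℚ} (hq : 0 < q) {L L' : List ℕ} (hL : IsExpansion L q)
    (hL' : IsExpansion L' q) : L.sum = L'.sum :=
  (main_ind L.length L L' q le_rfl hq hL hL').1

lemma exp_unique {q : ℚ} (hq : 0 < q) {L L' : List ℕ} (hL : IsExpansion L q)
    (hL' : IsExpansion L' q) (h2 : 2 ≤ L.getLastD 0) (h2' : 2 ≤ L'.getLastD 0) : L = L' :=
  (main_ind L.length L L' q le_rfl hq hL hL').2 h2 h2'

lemma exp_one {L : List ℕ} (h : IsExpansion L 1) : L = [1] ∨ L = [0, 1] := by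
  obtain ⟨hne, ht, hv⟩ := h
  match L with
  | [a] =>
    left
    simp only [cfVal] at hv
    have : a = 1 := by exact_mod_cast hv
    rw [this]
  | a :: b :: t =>
    have htne : (b :: t) ≠ [] := by simp
    have hx : 1 ≤ cfVal (b :: t) := one_le_cfVal _ (by simpa using ht) htne
    rw [cfVal_cons a _ htne] at hv
    have hx0 : (0:ℚ) < cfVal (b :: t) := by linarith
    have h1 : (0:ℚ) < 1 / cfVal (b :: t) := by positivity
    have h2 : 1 / cfVal (b :: t) ≤ 1 := by rw [div_le_one hx0]; exact hx
    have ha0 : (a:ℚ) < 1 := by linarith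
    have ha0' : a < 1 := by exact_mod_cast ha0
    have ha0'' : a = 0 := by omega
    have hv1 : 1 / cfVal (b :: t) = 1 := by rw [ha0''] at hv; push_cast at hv; linarith
    have hvv : cfVal (b :: t) = 1 := by field_simp at hv1; linarith
    have hbt : (b :: t) = [1] := cfVal_eq_one _ (by simpa using ht) htne hvv
    right
    rw [ha0'', hbt]

lemma IP_struct {α β : ℚ} (hα : 0 < α) (h : ImmediatelyPrecedes α β) :
    ∃ (P : List ℕ) (b : ℕ), 1 ≤ b ∧ IsExpansion (P ++ [b]) α ∧ cfVal (P ++ [b + 1]) = β := by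
  obtain ⟨⟨M, hM, ℓ, hℓ, b, hb1, hb2, hval⟩, a, ⟨Lα, hLα, hLαs⟩, ⟨Mβ, hMβ, hMβs⟩⟩ := h
  simp only [List.get_eq_getElem] at hb2
  set P : List ℕ := M.take ℓ with hP
  set R : List ℕ := M.drop (ℓ+1) with hR
  have hMsplit : M = P ++ M[ℓ] :: R := by
    conv_lhs => rw [← List.take_append_drop ℓ M, List.drop_eq_getElem_cons hℓ]
  have hRge : ∀ x ∈ R, 1 ≤ x := fun x hx => hM.2.1 x (mem_tail_drop hx)
  have hexp : IsExpansion (P ++ [b]) α := by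
    refine ⟨by simp, ?_, hval⟩
    intro x hx
    rcases mem_tail_concat hx with hx' | rfl
    · exact hM.2.1 x (mem_tail_take hx')
    · exact hb1
  have hβpos : 0 < β := by
    rw [← hM.2.2]
    exact cfVal_pos M hM.2.1 hM.1 (one_le_getLastD_of hM.2.1 ℓ hℓ (le_trans hb1 hb2))
  have ha : P.sum + b = a := by
    have h' := sum_inv hα hexp hLα
    rw [hLαs] at h'
    simp [List.sum_append] at h'
    omega
  have haM : M.sum = a + 1 := by
    have h' := sum_inv hβpos hM hMβ
    rw [hMβs] at h'
    exact h'
  have hsum : M.sum = P.sum + (M[ℓ] + R.sum) := by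
    conv_lhs => rw [hMsplit]
    simp [List.sum_append]
  have key : M[ℓ] + R.sum = b + 1 := by omega
  have hRle : R.sum ≤ 1 := by omega
  rcases Nat.lt_or_ge R.sum 1 with h0 | h1
  · have hR0 : R = [] := by
      cases hRc : R with
      | nil => rfl
      | cons c r =>
        exfalso
        have : 1 ≤ c := hRge c (by rw [hRc]; simp)
        have : R.sum = c + r.sum := by rw [hRc]; simp
        omega
    have hMℓ : M[ℓ] = b + 1 := by rw [hR0] at key; simpa using key
    refine ⟨P, b, hb1, hexp, ?_⟩
    rw [← hM.2.2, hMsplit, hR0, hMℓ]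
  · have hRsum : R.sum = 1 := le_antisymm hRle h1
    have hR1 : R = [1] := by
      cases hRc : R with
      | nil => rw [hRc] at hRsum; simp at hRsum
      | cons c r =>
        have hc : 1 ≤ c := hRge c (by rw [hRc]; simp)
        have hsums : c + r.sum = 1 := by rw [hRc] at hRsum; simpa using hRsum
        have hc1 : c = 1 := by omega
        have hr0 : r.sum = 0 := by omega
        have hrnil : r = [] := by
          cases hrc : r with
          | nil => rfl
          | cons d s =>
            exfalso
            have : 1 ≤ d := hRge d (by rw [hRc, hrc]; simp)
            have : r.sum = d + s.sum := by rw [hrc]; simp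
            omega
        rw [hc1, hrnil]
    have hMℓ : M[ℓ] = b := by rw [hR1] at key; simp at key; omega
    refine ⟨P, b, hb1, hexp, ?_⟩
    rw [← hM.2.2, hMsplit, hR1, hMℓ, ← cfVal_split P b]

/-- Each positive rational immediately precedes exactly two positive
rationals: `1` immediately precedes exactly `2` and `1/2`; and if `α = [a₁, …, a_k]` with
`a_k ≥ 2`, the positive rationals immediately preceded by `α` are exactly
`[a₁, …, a_{k−1}, a_k + 1]` and `[a₁, …, a_{k−1}, a_k − 1, 2]`. -/
theorem immediately_precedes_exactly_two :
    (∀ β : ℚ, ImmediatelyPrecedes 1 β ↔ (β = 2 ∨ β = 1 / 2)) ∧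
    (∀ (α : ℚ) (L : List ℕ), 0 < α → IsExpansion L α → 2 ≤ L.getLastD 0 →
      ∀ β : ℚ, ImmediatelyPrecedes α β ↔
        (β = cfVal (L.dropLast ++ [L.getLastD 0 + 1]) ∨
         β = cfVal (L.dropLast ++ [L.getLastD 0 - 1, 2]))) := by
  constructor
  · -- part 1
    intro β
    constructor
    · intro h
      obtain ⟨P, b, hb, hexp, hval⟩ := IP_struct one_pos h
      rcases exp_one hexp with hc | hc
      · -- P ++ [b] = [1]
        rcases P with _ | ⟨p, ps⟩
        · simp at hc
          subst hc
          left
          rw [← hval]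
          norm_num [cfVal]
        · exfalso
          have := congrArg List.length hc
          simp at this
      · -- P ++ [b] = [0, 1]
        rcases P with _ | ⟨p, ps⟩
        · exfalso
          have := congrArg List.length hc
          simp at this
        · rcases ps with _ | ⟨q, qs⟩
          · simp at hc
            obtain ⟨rfl, rfl⟩ := hc
            right
            rw [← hval]
            norm_num [cfVal]
          · exfalso
            have := congrArg List.length hc
            simp at this
    · rintro (rfl | rfl)
      · refine ⟨⟨[2], ⟨by simp, by simp, by norm_num [cfVal]⟩, 0, by simp, 1, le_rfl, ?_, ?_⟩,
          1, ⟨[1], ⟨by simp, by simp, by norm_num [cfVal]⟩, by simp⟩,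
          ⟨[2], ⟨by simp, by simp, by norm_num [cfVal]⟩, by simp⟩⟩
        · simp
        · norm_num [cfVal]
      · refine ⟨⟨[0, 2], ⟨by simp, by simp, by norm_num [cfVal]⟩, 1, by simp, 1, le_rfl, ?_, ?_⟩,
          1, ⟨[1], ⟨by simp, by simp, by norm_num [cfVal]⟩, by simp⟩,
          ⟨[0, 2], ⟨by simp, by simp, by norm_num [cfVal]⟩, by simp⟩⟩
        · simp
        · norm_num [cfVal]
  · -- part 2
    intro α L hα hL hg β
    have hLD : L = L.dropLast ++ [L.getLastD 0] := eq_dropLast_concat hL.1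
    constructor
    · intro h
      obtain ⟨P, b, hb, hexp, hval⟩ := IP_struct hα h
      rcases Nat.lt_or_ge b 2 with hb2 | hb2
      · -- b = 1
        have hb1 : b = 1 := by omega
        subst hb1
        rcases P.eq_nil_or_concat with rfl | ⟨Q, c, hPQ⟩
        · exfalso
          have hα1 : α = 1 := by rw [← hexp.2.2]; norm_num [cfVal]
          rw [hα1] at hL
          rcases exp_one hL with h1 | h1 <;> rw [h1] at hg <;> simp at hg
        · rw [List.concat_eq_append] at hPQ
          subst hPQ
          rcases Nat.eq_zero_or_pos c with rfl | hc
          · exfalso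
            cases Q with
            | nil =>
              have hα1 : α = 1 := by rw [← hexp.2.2]; norm_num [cfVal]
              rw [hα1] at hL
              rcases exp_one hL with h1 | h1 <;> rw [h1] at hg <;> simp at hg
            | cons p ps =>
              have h0 : (0:ℕ) ∈ (((p :: ps) ++ [0]) ++ [1]).tail := by simp
              have := hexp.2.1 0 h0
              omega
          · have hexp2 : IsExpansion (Q ++ [c + 1]) α := by
              refine ⟨by simp, ?_, ?_⟩
              · intro x hx
                rcases mem_tail_concat hx with hx' | rfl
                · exact hexp.2.1 x (mem_tail_concat_of (mem_tail_concat_of hx'))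
                · omega
              · rw [← cfVal_split Q c]
                have e : Q ++ [c, 1] = (Q ++ [c]) ++ [1] := by simp
                rw [e]
                exact hexp.2.2
            have huniq : Q ++ [c + 1] = L :=
              exp_unique hα hexp2 hL (by rw [List.getLastD_concat]; omega) hg
            have hQ : L.dropLast = Q := by rw [← huniq, List.dropLast_concat]
            have hgc : L.getLastD 0 = c + 1 := by rw [← huniq, List.getLastD_concat]
            right
            rw [← hval, hQ, hgc]
            congr 1
            simp
      · -- b ≥ 2
        have hPb : P ++ [b] = L :=
          exp_unique hα hexp hL (by rw [List.getLastD_concat]; omega) hg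
        have hQ : L.dropLast = P := by rw [← hPb, List.dropLast_concat]
        have hgb : L.getLastD 0 = b := by rw [← hPb, List.getLastD_concat]
        left
        rw [← hval, hQ, hgb]
    · rintro (rfl | rfl)
      · -- β = cfVal (dropLast ++ [g+1])
        set D : List ℕ := L.dropLast with hD
        set g : ℕ := L.getLastD 0 with hgdef
        have hMexp : IsExpansion (D ++ [g + 1]) (cfVal (D ++ [g + 1])) := by
          refine ⟨by simp, ?_, rfl⟩
          intro x hx
          rcases mem_tail_concat hx with hx' | rfl
          · refine hL.2.1 x ?_
            rw [hLD]
            exact mem_tail_concat_of hx'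
          · omega
        have hsum1 : (D ++ [g + 1]).sum = L.sum + 1 := by
          conv_rhs => rw [hLD]
          simp [List.sum_append]
          omega
        refine ⟨⟨D ++ [g + 1], hMexp, D.length, by simp, g, by omega, ?_, ?_⟩,
          L.sum, ⟨L, hL, rfl⟩, ⟨D ++ [g + 1], hMexp, hsum1⟩⟩
        · simp only [List.get_eq_getElem]
          rw [List.getElem_concat_length (l := D) (a := g + 1) (i := D.length) rfl]
          omega
        · rw [List.take_left]
          rw [← hLD]
          exact hL.2.2
      · -- β = cfVal (dropLast ++ [g-1, 2])
        set D : List ℕ := L.dropLast with hD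
        set g : ℕ := L.getLastD 0 with hgdef
        have hassoc : D ++ [g - 1, 2] = (D ++ [g - 1]) ++ [2] := by simp
        have hMexp : IsExpansion ((D ++ [g - 1]) ++ [2]) (cfVal (D ++ [g - 1, 2])) := by
          refine ⟨by simp, ?_, by rw [← hassoc]⟩
          intro x hx
          rcases mem_tail_concat hx with hx' | rfl
          · rcases mem_tail_concat hx' with hx'' | rfl
            · refine hL.2.1 x ?_
              rw [hLD]
              exact mem_tail_concat_of hx''
            · omega
          · omega
        have hsum2 : ((D ++ [g - 1]) ++ [2]).sum = L.sum + 1 := by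
          conv_rhs => rw [hLD]
          simp [List.sum_append]
          omega
        refine ⟨⟨(D ++ [g - 1]) ++ [2], hMexp, (D ++ [g - 1]).length, by simp, 1, le_rfl, ?_, ?_⟩,
          L.sum, ⟨L, hL, rfl⟩, ⟨(D ++ [g - 1]) ++ [2], hMexp, hsum2⟩⟩
        · simp only [List.get_eq_getElem]
          rw [List.getElem_concat_length (l := D ++ [g - 1]) (a := 2) (i := (D ++ [g - 1]).length) rfl]
          omega
        · rw [List.take_left]
          have e1 : (D ++ [g - 1]) ++ [1] = D ++ [g - 1, 1] := by simp
          rw [e1, cfVal_split D (g - 1)]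
          have e2 : g - 1 + 1 = g := by omega
          rw [e2, ← hLD]
          exact hL.2.2

end ResolutionGraph
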